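/- arXiv:1501.00869 — 2 statements merged into one kernel-verified Lean document; each statement's English description precedes it below -/
import Mathlib

section
/- Every critical graph with at least three vertices is 2-connected. -/
/-!
If a critical graph `G` had a separation `(A, B)` with `|A ∩ B| ≤ 1` (a disconnection or a cut
vertex `v`), both sides would be proper subgraphs and hence `(χ'(G) - 1)`-edge-colorable.
Since `G` is class 2, `d(v) ≤ Δ(G) ≤ χ'(G) - 1`, so the colors of one side can be permuted to
avoid those the other side uses at `v`; the two colorings then glue to a
`(χ'(G) - 1)`-edge-coloring of `G`, a contradiction.
-/

open SimpleGraph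

variable {V : Type*}

/-- `c` is a proper edge coloring of `G` using colors `0, …, n-1`:
every edge gets a color `< n`, and distinct edges sharing an endpoint
receive distinct colors. -/
def IsProperEdgeColoring (G : SimpleGraph V) (n : ℕ) (c : Sym2 V → ℕ) : Prop :=
  (∀ e ∈ G.edgeSet, c e < n) ∧
    ∀ e₁ ∈ G.edgeSet, ∀ e₂ ∈ G.edgeSet, e₁ ≠ e₂ → (∃ v, v ∈ e₁ ∧ v ∈ e₂) →
      c e₁ ≠ c e₂

/-- The edge chromatic number `χ'(G)`: the least number of colors in a proper
edge coloring of `G`. -/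
noncomputable def edgeChromaticNumber (G : SimpleGraph V) : ℕ :=
  sInf {n | ∃ c, IsProperEdgeColoring G n c}

/-- The degree `d_G(v)` of a vertex. -/
noncomputable def deg (G : SimpleGraph V) (v : V) : ℕ := (G.neighborSet v).ncard

/-- The maximum vertex degree `Δ(G)`. -/
noncomputable def maxDeg (G : SimpleGraph V) : ℕ := sSup {d | ∃ v, deg G v = d}

/-- `G` is critical: it is class 2 (i.e. `χ'(G) ≠ Δ(G)`) and every proper
subgraph `H` of `G` satisfies `χ'(H) < χ'(G)`. -/
def IsCritical (G : SimpleGraph V) : Prop :=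
  edgeChromaticNumber G ≠ maxDeg G ∧
    ∀ H : G.Subgraph, H ≠ ⊤ → edgeChromaticNumber H.coe < edgeChromaticNumber G

/-- `G` is `k`-critical: critical with maximum degree `k`. -/
def IsKCritical (G : SimpleGraph V) (k : ℕ) : Prop :=
  IsCritical G ∧ maxDeg G = k

/-- `G` is 2-connected: it is connected and deleting any single vertex
leaves a connected graph. -/
def IsTwoConnected (G : SimpleGraph V) : Prop :=
  G.Connected ∧ ∀ v : V, (((⊤ : G.Subgraph).deleteVerts {v}).coe).Connected

open Set

namespace IsProperEdgeColoring

variable {G : SimpleGraph V} {n : ℕ} {c : Sym2 V → ℕ}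

lemma mono {m : ℕ} (hc : IsProperEdgeColoring G n c) (hnm : n ≤ m) :
    IsProperEdgeColoring G m c :=
  ⟨fun e he => (hc.1 e he).trans_le hnm, hc.2⟩

lemma comp {π : ℕ → ℕ} (hc : IsProperEdgeColoring G n c) (hinj : InjOn π (Iio n))
    (hmaps : MapsTo π (Iio n) (Iio n)) : IsProperEdgeColoring G n (π ∘ c) :=
  ⟨fun e he => hmaps (hc.1 e he), fun e₁ h₁ e₂ h₂ hne hmeet heq =>
    hc.2 e₁ h₁ e₂ h₂ hne hmeet (hinj (hc.1 e₁ h₁) (hc.1 e₂ h₂) heq)⟩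

lemma deg_le [Finite V] (hc : IsProperEdgeColoring G n c) (v : V) : deg G v ≤ n := by
  have hinj : InjOn (fun w => c s(v, w)) (G.neighborSet v) := by
    intro w₁ h₁ w₂ h₂ heq
    by_contra hne
    exact hc.2 _ h₁ _ h₂ (fun h => hne (Sym2.congr_right.mp h))
      ⟨v, Sym2.mem_mk_left _ _, Sym2.mem_mk_left _ _⟩ heq
  calc deg G v ≤ (Iio n).ncard :=
        ncard_le_ncard_of_injOn _ (fun w hw => hc.1 _ hw) hinj (finite_Iio n)
    _ = n := ncard_Iio_nat n

lemma exists_map {W : Type*} {G : SimpleGraph W} {c : Sym2 W → ℕ}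
    (hc : IsProperEdgeColoring G n c) (f : W ↪ V) :
    ∃ c', IsProperEdgeColoring (G.map f) n c' := by
  have hf : Function.Injective (Sym2.map f) := Sym2.map.injective f.injective
  refine ⟨Function.extend (Sym2.map f) c 0, ?_, ?_⟩ <;> rw [edgeSet_map]
  · rintro _ ⟨e, he, rfl⟩
    rw [Function.Embedding.sym2Map_apply, hf.extend_apply]
    exact hc.1 e he
  · rintro _ ⟨e₁, h₁, rfl⟩ _ ⟨e₂, h₂, rfl⟩ hne ⟨x, hx₁, hx₂⟩
    simp only [Function.Embedding.sym2Map_apply, hf.extend_apply, Sym2.mem_map] at *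
    obtain ⟨a, ha, rfl⟩ := hx₁
    obtain ⟨b, hb, hab⟩ := hx₂
    exact hc.2 e₁ h₁ e₂ h₂ (fun h => hne (h ▸ rfl)) ⟨a, ha, f.injective hab ▸ hb⟩

end IsProperEdgeColoring

lemma exists_injOn_mapsTo_compl {n : ℕ} {s t : Set ℕ} (hs : s ⊆ Iio n) (ht : t ⊆ Iio n)
    (hst : s.ncard + t.ncard ≤ n) :
    ∃ π : ℕ → ℕ, InjOn π (Iio n) ∧ MapsTo π (Iio n) (Iio n) ∧ MapsTo π t sᶜ := by
  have htfin : t.Finite := (finite_Iio n).subset ht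
  obtain ⟨f, hft, hf⟩ := htfin.exists_injOn_of_encard_le (t := Iio n \ s) (by
    rw [← htfin.cast_ncard_eq, ← (finite_Iio n).sdiff.cast_ncard_eq,
      ncard_sdiff hs ((finite_Iio n).subset hs), ncard_Iio_nat]
    norm_cast
    omega)
  obtain ⟨g, hg⟩ := MapsTo.exists_equiv_extend_of_card_eq (t := Finset.range n)
    (s := {i : Fin n | (i : ℕ) ∈ t}) (f := f ∘ Fin.val) (by simp)
    (fun i hi => by simpa using (hft hi).1) (fun i hi j hj h => Fin.ext (hf hi hj h))
  refine ⟨fun x => if h : x < n then g ⟨x, h⟩ else x, ?_, ?_, ?_⟩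
  · intro x hx y hy h
    simp only [mem_Iio] at hx hy
    simpa [hx, hy] using h
  · intro x hx
    simp only [mem_Iio] at hx
    simpa [hx] using Finset.mem_range.mp (g ⟨x, hx⟩).2
  · intro x hx
    have hxn : x < n := ht hx
    simp only [hxn, dite_true, hg ⟨x, hxn⟩ hx]
    exact (hft hx).2

lemma exists_isProperEdgeColoring_sup [Finite V] {G₁ G₂ : SimpleGraph V} {v : V} {n : ℕ}
    {c₁ c₂ : Sym2 V → ℕ} (hc₁ : IsProperEdgeColoring G₁ n c₁)
    (hc₂ : IsProperEdgeColoring G₂ n c₂) (hsupp : G₁.support ∩ G₂.support ⊆ {v})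
    (hdeg : deg G₁ v + deg G₂ v ≤ n) :
    ∃ c, IsProperEdgeColoring (G₁ ⊔ G₂) n c := by
  classical
  let colorsAt (G : SimpleGraph V) (c : Sym2 V → ℕ) : Set ℕ :=
    (fun w => c s(v, w)) '' G.neighborSet v
  have colorsAt_subset {G c} (hc : IsProperEdgeColoring G n c) : colorsAt G c ⊆ Iio n := by
    rintro _ ⟨w, hw, rfl⟩
    exact hc.1 _ hw
  obtain ⟨π, hinj, hmaps, hcompl⟩ := exists_injOn_mapsTo_compl (colorsAt_subset hc₁)
    (colorsAt_subset hc₂) ((add_le_add ncard_image_le ncard_image_le).trans hdeg)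
  have hπc₂ := hc₂.comp hinj hmaps
  -- edges of `G₁` and `G₂` can only meet at `v`, where `π` separates their colors
  have cross : ∀ e₁ ∈ G₁.edgeSet, ∀ e₂ ∈ G₂.edgeSet, (∃ w, w ∈ e₁ ∧ w ∈ e₂) →
      c₁ e₁ ≠ π (c₂ e₂) := by
    rintro e₁ h₁ e₂ h₂ ⟨w, hw₁, hw₂⟩
    obtain ⟨x, rfl⟩ := Sym2.mem_iff_exists.mp hw₁
    obtain ⟨y, rfl⟩ := Sym2.mem_iff_exists.mp hw₂
    obtain rfl : w = v := hsupp ⟨⟨x, h₁⟩, ⟨y, h₂⟩⟩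
    exact fun h => hcompl ⟨y, h₂, rfl⟩ ⟨x, h₁, h⟩
  refine ⟨fun e => if e ∈ G₁.edgeSet then c₁ e else π (c₂ e), ?_, ?_⟩
  · intro e he
    rw [edgeSet_sup] at he
    dsimp only
    split_ifs with h
    · exact hc₁.1 e h
    · exact hπc₂.1 e (he.resolve_left h)
  · intro e₁ h₁ e₂ h₂ hne hmeet
    rw [edgeSet_sup] at h₁ h₂
    by_cases g₁ : e₁ ∈ G₁.edgeSet <;> by_cases g₂ : e₂ ∈ G₁.edgeSet <;>
      simp only [g₁, g₂, if_true, if_false]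
    · exact hc₁.2 e₁ g₁ e₂ g₂ hne hmeet
    · exact cross e₁ g₁ e₂ (h₂.resolve_left g₂) hmeet
    · exact (cross e₂ g₂ e₁ (h₁.resolve_left g₁) (hmeet.imp fun _ => And.symm)).symm
    · exact hπc₂.2 e₁ (h₁.resolve_left g₁) e₂ (h₂.resolve_left g₂) hne hmeet

lemma deg_sup [Finite V] {G₁ G₂ : SimpleGraph V} {v : V}
    (hsupp : G₁.support ∩ G₂.support ⊆ {v}) (x : V) :
    deg (G₁ ⊔ G₂) x = deg G₁ x + deg G₂ x := by
  refine (congrArg ncard (neighborSet_sup x)).trans (ncard_union_eq ?_)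
  refine disjoint_left.mpr fun w hw₁ hw₂ => ?_
  obtain rfl : x = v := hsupp ⟨⟨w, hw₁⟩, ⟨w, hw₂⟩⟩
  obtain rfl : w = x := hsupp ⟨⟨x, hw₁.symm⟩, ⟨x, hw₂.symm⟩⟩
  exact G₁.irrefl hw₁

section EdgeChromaticNumber

variable {G : SimpleGraph V} {n : ℕ}

lemma edgeChromaticNumber_le {c : Sym2 V → ℕ} (hc : IsProperEdgeColoring G n c) :
    edgeChromaticNumber G ≤ n :=
  Nat.sInf_le ⟨c, hc⟩

variable [Finite V]

lemma exists_isProperEdgeColoring_edgeChromaticNumber (G : SimpleGraph V) :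
    ∃ c, IsProperEdgeColoring G (edgeChromaticNumber G) c := by
  obtain ⟨m, ⟨e⟩⟩ := Finite.exists_equiv_fin (Sym2 V)
  have hc : IsProperEdgeColoring G m (fun x => e x) :=
    ⟨fun x _ => (e x).2, fun _ _ _ _ hne _ h => hne (e.injective (Fin.ext h))⟩
  exact Nat.sInf_mem (s := {n | ∃ c, IsProperEdgeColoring G n c}) ⟨m, _, hc⟩

lemma exists_isProperEdgeColoring_of_edgeChromaticNumber_le
    (h : edgeChromaticNumber G ≤ n) : ∃ c, IsProperEdgeColoring G n c :=
  (exists_isProperEdgeColoring_edgeChromaticNumber G).imp fun _ hc => hc.mono h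

lemma deg_le_maxDeg (G : SimpleGraph V) (v : V) : deg G v ≤ maxDeg G := by
  refine le_csSup ⟨Nat.card V, ?_⟩ ⟨v, rfl⟩
  rintro _ ⟨w, rfl⟩
  exact ncard_le_card _

lemma maxDeg_le_edgeChromaticNumber (G : SimpleGraph V) : maxDeg G ≤ edgeChromaticNumber G := by
  obtain ⟨c, hc⟩ := exists_isProperEdgeColoring_edgeChromaticNumber G
  exact csSup_le' (by rintro _ ⟨v, rfl⟩; exact hc.deg_le v)

end EdgeChromaticNumber

namespace IsCritical

variable [Finite V] {G : SimpleGraph V}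

lemma maxDeg_lt (hG : IsCritical G) : maxDeg G < edgeChromaticNumber G :=
  (maxDeg_le_edgeChromaticNumber G).lt_of_ne' hG.1

lemma exists_isProperEdgeColoring_of_ne_top (hG : IsCritical G) {H : G.Subgraph} (hH : H ≠ ⊤) :
    ∃ c, IsProperEdgeColoring H.spanningCoe (edgeChromaticNumber G - 1) c := by
  obtain ⟨c, hc⟩ := exists_isProperEdgeColoring_of_edgeChromaticNumber_le
    (Nat.le_sub_one_of_lt (hG.2 H hH))
  rw [← Subgraph.spanningCoe_coe]
  exact hc.exists_map (Function.Embedding.subtype _)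

lemma eq_univ_or_eq_univ_of_separation (hG : IsCritical G) {A B : Set V} {v : V}
    (hAB : A ∩ B ⊆ {v}) (hcover : ∀ a b, G.Adj a b → a ∈ A ∧ b ∈ A ∨ a ∈ B ∧ b ∈ B) :
    A = univ ∨ B = univ := by
  by_contra! ⟨hA, hB⟩
  have induce_ne_top {s : Set V} (hs : s ≠ univ) : (⊤ : G.Subgraph).induce s ≠ ⊤ :=
    fun h => hs (by simpa using congrArg Subgraph.verts h)
  set G₁ := ((⊤ : G.Subgraph).induce A).spanningCoe
  set G₂ := ((⊤ : G.Subgraph).induce B).spanningCoe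
  have hsup : G₁ ⊔ G₂ = G := by
    ext a b
    simp only [G₁, G₂, sup_adj, Subgraph.spanningCoe_adj, Subgraph.induce_adj, Subgraph.top_adj]
    exact ⟨fun h => h.elim (·.2.2) (·.2.2),
      fun h => (hcover a b h).imp (fun h' => ⟨h'.1, h'.2, h⟩) (fun h' => ⟨h'.1, h'.2, h⟩)⟩
  have hsupp : G₁.support ∩ G₂.support ⊆ {v} :=
    fun w ⟨⟨_, h₁⟩, ⟨_, h₂⟩⟩ => hAB ⟨h₁.1, h₂.1⟩
  have hdeg : deg G₁ v + deg G₂ v ≤ edgeChromaticNumber G - 1 := by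
    rw [← deg_sup hsupp, hsup]
    have := hG.maxDeg_lt
    have := deg_le_maxDeg G v
    omega
  obtain ⟨c₁, hc₁⟩ := hG.exists_isProperEdgeColoring_of_ne_top (induce_ne_top hA)
  obtain ⟨c₂, hc₂⟩ := hG.exists_isProperEdgeColoring_of_ne_top (induce_ne_top hB)
  obtain ⟨c, hc⟩ := exists_isProperEdgeColoring_sup hc₁ hc₂ hsupp hdeg
  have := edgeChromaticNumber_le (hsup ▸ hc)
  have := hG.maxDeg_lt
  omega

lemma induce_preconnected (hG : IsCritical G) {W : Set V} {v : V} (hW : Wᶜ ⊆ {v}) :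
    (G.induce W).Preconnected := by
  rintro ⟨x, hxW⟩ ⟨y, hyW⟩
  by_contra hxy
  let S : Set V := {z | ∃ hz : z ∈ W, (G.induce W).Reachable ⟨x, hxW⟩ ⟨z, hz⟩}
  have closed {a b : V} (hab : G.Adj a b) (ha : a ∈ S) (hb : b ∈ W) : b ∈ S :=
    ⟨hb, ha.2.trans (Adj.reachable (G := G.induce W) (u := ⟨a, ha.1⟩) (v := ⟨b, hb⟩) hab)⟩
  have hx : x ∈ S := ⟨hxW, Reachable.refl _⟩
  have hy : y ∉ S := fun ⟨_, h⟩ => hxy h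
  have hcover (a b : V) (hab : G.Adj a b) :
      a ∈ S ∪ Wᶜ ∧ b ∈ S ∪ Wᶜ ∨ a ∈ Sᶜ ∧ b ∈ Sᶜ := by
    by_cases ha : a ∈ S <;> by_cases hb : b ∈ S
    · exact .inl ⟨.inl ha, .inl hb⟩
    · exact .inl ⟨.inl ha, .inr fun hbW => hb (closed hab ha hbW)⟩
    · exact .inl ⟨.inr fun haW => ha (closed hab.symm hb haW), .inl hb⟩
    · exact .inr ⟨ha, hb⟩
  rcases hG.eq_univ_or_eq_univ_of_separation (v := v)
    (fun z ⟨hzA, hzB⟩ => hW (hzA.resolve_left hzB)) hcover with h | h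
  · exact (h ▸ mem_univ y : y ∈ S ∪ Wᶜ).elim hy (· hyW)
  · exact (h ▸ mem_univ x : x ∈ Sᶜ) hx

end IsCritical

/-- Every critical graph with at least three vertices is 2-connected. -/
theorem critical_twoConnected [Fintype V] (G : SimpleGraph V)
    (hG : IsCritical G) (hcard : 3 ≤ Fintype.card V) :
    IsTwoConnected G := by
  obtain ⟨v⟩ : Nonempty V := Fintype.card_pos_iff.mp (by omega)
  refine ⟨(connected_iff G).2 ⟨?_, ⟨v⟩⟩, fun w => ?_⟩
  · exact (induceUnivIso G).preconnected_iff.mp (hG.induce_preconnected (v := v) (by simp))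
  · obtain ⟨u, hu⟩ := Fintype.exists_ne_of_one_lt_card (by omega) w
    have h : (G.induce (univ \ {w})).Connected :=
      (connected_iff _).2 ⟨hG.induce_preconnected (v := w) (by simp), ⟨u, by simpa using hu⟩⟩
    rwa [induce_eq_coe_induce_top] at h
end

section
/- Let G be a critical graph and let xy be an edge of G with d_G(x) + d_G(y) = Δ(G) + 2. Then every vertex of N(N(x) ∪ N(y)) \ {x, y} has degree at least Δ(G) − 1, where N(S) denotes the union of the neighborhoods of the vertices in S. -/
open SimpleGraph

variable {V : Type*}

/-! Write `Δ = Δ(G)`. Colouring `G - xy` with `χ'(G) - 1` colours and using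
`d(x) + d(y) = Δ + 2` gives `χ'(G) = Δ + 1`: `G` is not `Δ`-colourable, but every `G - e` is.
In a `Δ`-colouring of `G - pq` no colour is missing at both `p` and `q`, and for `α` missing at
`p` and `θ` missing at `q` the `(α, θ)`-Kempe chain of `p` reaches `q` (otherwise swapping it
frees `θ` at both ends). A Kempe chain is a path or a cycle, so no third vertex of it misses
`α` or `θ`.

For `pq = xy` the degree condition makes the colours missing at `x` and at `y` partition all `Δ`
colours, which already forces `d(w) = Δ` for `w ∈ N(x) \ {y}`. If `u ∈ N(w) \ {x, y}` had
`d(u) ≤ Δ - 2`, Kempe swaps and recolourings would produce a colouring of `G - xw` in which `xy`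
and `wu` share a colour `β` while `w` and `u` miss a common colour. There the colours missing at
`x` and at `y` partition the colours other than `β` and avoid those missing at `u`, which leaves
room for only one colour missing at `u`. -/

def IsEdgeColoringOn (E : Set (Sym2 V)) (k : ℕ) (c : Sym2 V → ℕ) : Prop :=
  (∀ e ∈ E, c e < k) ∧
    ∀ e₁ ∈ E, ∀ e₂ ∈ E, e₁ ≠ e₂ → (∃ v, v ∈ e₁ ∧ v ∈ e₂) → c e₁ ≠ c e₂

def missingColors (E : Set (Sym2 V)) (k : ℕ) (c : Sym2 V → ℕ) (v : V) : Set ℕ :=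
  {a | a < k ∧ ∀ e ∈ E, v ∈ e → c e ≠ a}

lemma isProperEdgeColoring_iff {G : SimpleGraph V} {k : ℕ} {c : Sym2 V → ℕ} :
    IsProperEdgeColoring G k c ↔ IsEdgeColoringOn G.edgeSet k c := Iff.rfl

section Coloring

variable {E : Set (Sym2 V)} {k : ℕ} {c c' : Sym2 V → ℕ} {v p q : V} {a : ℕ} {f : Sym2 V}

lemma IsEdgeColoringOn.mono_colors {k' : ℕ} (hc : IsEdgeColoringOn E k c) (hk : k ≤ k') :
    IsEdgeColoringOn E k' c :=
  ⟨fun e he => (hc.1 e he).trans_le hk, hc.2⟩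

lemma IsEdgeColoringOn.mono {E' : Set (Sym2 V)} (hc : IsEdgeColoringOn E k c) (hE : E' ⊆ E) :
    IsEdgeColoringOn E' k c :=
  ⟨fun e he => hc.1 e (hE he), fun e₁ h₁ e₂ h₂ => hc.2 e₁ (hE h₁) e₂ (hE h₂)⟩

lemma IsEdgeColoringOn.eq_of_color_eq (hc : IsEdgeColoringOn E k c) {e₁ e₂ : Sym2 V}
    (h₁ : e₁ ∈ E) (h₂ : e₂ ∈ E) (hv₁ : v ∈ e₁) (hv₂ : v ∈ e₂) (h : c e₁ = c e₂) : e₁ = e₂ := by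
  by_contra hne
  exact hc.2 e₁ h₁ e₂ h₂ hne ⟨v, hv₁, hv₂⟩ h

lemma color_notMem_missingColors {e : Sym2 V} (he : e ∈ E) (hv : v ∈ e) :
    c e ∉ missingColors E k c v :=
  fun h => h.2 e he hv rfl

lemma finite_missingColors (v : V) : (missingColors E k c v).Finite :=
  (Set.finite_Iio k).subset fun _ h => h.1

lemma missingColors_congr (h : ∀ e ∈ E, v ∈ e → c' e = c e) :
    missingColors E k c' v = missingColors E k c v := by
  ext ρ
  refine and_congr_right fun _ => forall₂_congr fun e he => ?_
  rw [imp_congr_right fun hv => by rw [h e he hv]]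

lemma IsEdgeColoringOn.ncard_add_ncard_missingColors (hc : IsEdgeColoringOn E k c) (v : V) :
    {e ∈ E | v ∈ e}.ncard + (missingColors E k c v).ncard = k := by
  set I := {e ∈ E | v ∈ e}
  have hinj : Set.InjOn c I := fun e₁ h₁ e₂ h₂ h => hc.eq_of_color_eq h₁.1 h₂.1 h₁.2 h₂.2 h
  have hsub : c '' I ⊆ Set.Iio k := by
    rintro _ ⟨e, he, rfl⟩
    exact hc.1 e he.1
  have hmissing : missingColors E k c v = Set.Iio k \ c '' I := by
    ext ρ
    simp only [missingColors, Set.mem_ofPred_eq, Set.mem_sdiff, Set.mem_Iio, Set.mem_image, I]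
    grind
  have hfin : (c '' I).Finite := (Set.finite_Iio k).subset hsub
  rw [hmissing, Set.ncard_sdiff hsub hfin, Set.ncard_Iio_nat, ← hinj.ncard_image]
  have := Set.ncard_le_ncard hsub
  rw [Set.ncard_Iio_nat] at this
  omega

lemma IsEdgeColoringOn.missingColors_sdiff_singleton_of_mem (hc : IsEdgeColoringOn E k c)
    (hf : f ∈ E) (hv : v ∈ f) :
    missingColors (E \ {f}) k c v = insert (c f) (missingColors E k c v) := by
  ext ρ
  simp only [missingColors, Set.mem_insert_iff, Set.mem_ofPred_eq, Set.mem_sdiff,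
    Set.mem_singleton_iff, and_imp]
  constructor
  · rintro ⟨hρ, h⟩
    by_cases hρf : ρ = c f
    · exact Or.inl hρf
    · refine Or.inr ⟨hρ, fun e he hve => ?_⟩
      by_cases hef : e = f
      · subst hef; exact Ne.symm hρf
      · exact h e he hef hve
  · rintro (rfl | ⟨hρ, h⟩)
    · exact ⟨hc.1 f hf, fun e he hef hve hce => hef (hc.eq_of_color_eq he hf hve hv hce)⟩
    · exact ⟨hρ, fun e he _ hve => h e he hve⟩

lemma missingColors_sdiff_singleton_of_notMem (hv : v ∉ f) :
    missingColors (E \ {f}) k c v = missingColors E k c v := by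
  ext ρ
  simp only [missingColors, Set.mem_ofPred_eq, Set.mem_sdiff, Set.mem_singleton_iff, and_imp]
  refine and_congr_right fun _ => ⟨fun h e he hve => h e he ?_ hve, fun h e he _ => h e he⟩
  rintro rfl
  exact hv hve

lemma IsEdgeColoringOn.update_insert [DecidableEq V] (hc : IsEdgeColoringOn E k c)
    (hp : a ∈ missingColors E k c p) (hq : a ∈ missingColors E k c q) :
    IsEdgeColoringOn (insert s(p, q) E) k (Function.update c s(p, q) a) := by
  have key : ∀ e ∈ E, e ≠ s(p, q) → ∀ v ∈ s(p, q), v ∈ e → c e ≠ a := by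
    intro e he _ v hv hve
    rcases Sym2.mem_iff.1 hv with rfl | rfl
    exacts [hp.2 e he hve, hq.2 e he hve]
  refine ⟨fun e he => ?_, fun e₁ h₁ e₂ h₂ hne ⟨v, hv₁, hv₂⟩ => ?_⟩
  · by_cases h : e = s(p, q)
    · subst h; simpa using hp.1
    · rw [Function.update_of_ne h]
      exact hc.1 e (he.resolve_left h)
  · by_cases he₁ : e₁ = s(p, q) <;> by_cases he₂ : e₂ = s(p, q)
    · exact absurd (he₁.trans he₂.symm) hne
    · subst he₁
      rw [Function.update_self, Function.update_of_ne he₂]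
      exact (key e₂ (h₂.resolve_left he₂) he₂ v hv₁ hv₂).symm
    · subst he₂
      rw [Function.update_self, Function.update_of_ne he₁]
      exact key e₁ (h₁.resolve_left he₁) he₁ v hv₂ hv₁
    · rw [Function.update_of_ne he₁, Function.update_of_ne he₂]
      exact hc.2 e₁ (h₁.resolve_left he₁) e₂ (h₂.resolve_left he₂) hne ⟨v, hv₁, hv₂⟩

lemma IsEdgeColoringOn.update [DecidableEq V] (hc : IsEdgeColoringOn E k c) (he : s(p, q) ∈ E)
    (hp : a ∈ missingColors E k c p) (hq : a ∈ missingColors E k c q) :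
    IsEdgeColoringOn E k (Function.update c s(p, q) a) :=
  Set.insert_eq_of_mem he ▸ hc.update_insert hp hq

lemma missingColors_insert_update_of_mem [DecidableEq V] (hv : v ∈ f) :
    missingColors (insert f E) k (Function.update c f a) v =
      missingColors (E \ {f}) k c v \ {a} := by
  ext ρ
  simp only [missingColors, Set.mem_sdiff, Set.mem_singleton_iff, Set.mem_ofPred_eq,
    Set.forall_mem_insert, Function.update_self]
  constructor
  · rintro ⟨hρ, ha, h⟩
    refine ⟨⟨hρ, fun e he hve => ?_⟩, fun h' => ha hv h'.symm⟩
    rw [← Function.update_of_ne he.2 a c]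
    exact h e he.1 hve
  · rintro ⟨⟨hρ, h⟩, ha⟩
    refine ⟨hρ, fun _ h' => ha h'.symm, fun e he hve => ?_⟩
    by_cases hef : e = f
    · subst hef; rw [Function.update_self]; exact fun h' => ha h'.symm
    · rw [Function.update_of_ne hef]; exact h e ⟨he, hef⟩ hve

lemma missingColors_insert_update_of_notMem [DecidableEq V] (hv : v ∉ f) :
    missingColors (insert f E) k (Function.update c f a) v = missingColors E k c v := by
  ext ρ
  simp only [missingColors, Set.mem_ofPred_eq, Set.forall_mem_insert, hv, false_imp_iff,
    true_and]
  refine and_congr_right fun _ => forall₂_congr fun e he => imp_congr_right fun hve => ?_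
  rw [Function.update_of_ne (by rintro rfl; exact hv hve)]

lemma IsEdgeColoringOn.missingColors_update_of_mem [DecidableEq V] (hc : IsEdgeColoringOn E k c)
    (hf : f ∈ E) (hv : v ∈ f) :
    missingColors E k (Function.update c f a) v = insert (c f) (missingColors E k c v) \ {a} := by
  rw [← hc.missingColors_sdiff_singleton_of_mem hf hv, ← missingColors_insert_update_of_mem hv,
    Set.insert_eq_of_mem hf]

lemma missingColors_update_of_notMem [DecidableEq V] (hf : f ∈ E) (hv : v ∉ f) :
    missingColors E k (Function.update c f a) v = missingColors E k c v := by
  calc _ = missingColors (insert f E) k (Function.update c f a) v := by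
        rw [Set.insert_eq_of_mem hf]
    _ = _ := missingColors_insert_update_of_notMem hv

lemma IsEdgeColoringOn.update_insert_sdiff [DecidableEq V] (hc : IsEdgeColoringOn E k c)
    (hf : f ∈ E) (hv : v ∈ f) (hq : c f ∈ missingColors E k c q) (hqf : q ∉ f) :
    IsEdgeColoringOn (insert s(v, q) (E \ {f})) k (Function.update c s(v, q) (c f)) := by
  refine (hc.mono Set.sdiff_subset).update_insert ?_ ?_
  · rw [hc.missingColors_sdiff_singleton_of_mem hf hv]
    exact Set.mem_insert _ _
  · rwa [missingColors_sdiff_singleton_of_notMem hqf]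

end Coloring

theorem SimpleGraph.Connected.eq_or_eq_of_degree_le_one {W : Type*} [Fintype W]
    {H : SimpleGraph W} [DecidableRel H.Adj] (hH : H.Connected) (hdeg : ∀ v, H.degree v ≤ 2)
    {a b d : W} (hab : a ≠ b) (ha : H.degree a ≤ 1) (hb : H.degree b ≤ 1)
    (hd : H.degree d ≤ 1) : d = a ∨ d = b := by
  classical
  by_contra! hne
  set T : Finset W := {a, b, d}
  have hT : T.card = 3 := by
    rw [Finset.card_insert_of_notMem (by simp [hab, hne.1.symm]),
      Finset.card_pair (Ne.symm hne.2)]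
  have hlow : ∑ v ∈ T, H.degree v ≤ T.card := by
    rw [Finset.card_eq_sum_ones]
    refine Finset.sum_le_sum fun v hv => ?_
    simp only [T, Finset.mem_insert, Finset.mem_singleton] at hv
    rcases hv with rfl | rfl | rfl <;> assumption
  have hhigh : ∑ v ∈ Tᶜ, H.degree v ≤ 2 * Tᶜ.card := by
    rw [mul_comm, ← smul_eq_mul, ← Finset.sum_const]
    exact Finset.sum_le_sum fun v _ => hdeg v
  have hhand := H.sum_degrees_eq_twice_card_edges
  have htree := hH.card_vert_le_card_edgeSet_add_one
  rw [Nat.card_eq_fintype_card, Nat.card_eq_fintype_card, ← SimpleGraph.edgeFinset_card] at htree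
  rw [← Finset.sum_add_sum_compl T] at hhand
  rw [Finset.card_compl] at hhigh
  have : T.card ≤ Fintype.card W := Finset.card_le_univ T
  -- the degree sum `2|E|` is at most `2n - 3`, but a connected graph has `|E| ≥ n - 1`
  omega

def kempeGraph (E : Set (Sym2 V)) (c : Sym2 V → ℕ) (α β : ℕ) : SimpleGraph V :=
  SimpleGraph.fromEdgeSet {e ∈ E | c e = α ∨ c e = β}

def kempeChain (E : Set (Sym2 V)) (c : Sym2 V → ℕ) (α β : ℕ) (v : V) : Set V :=
  {w | (kempeGraph E c α β).Reachable v w}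

open Classical in
noncomputable def kempeSwap (E : Set (Sym2 V)) (c : Sym2 V → ℕ) (α β : ℕ) (v : V) :
    Sym2 V → ℕ :=
  fun e => if ∃ w ∈ e, w ∈ kempeChain E c α β v then Equiv.swap α β (c e) else c e

section Kempe

variable {E : Set (Sym2 V)} {k : ℕ} {c : Sym2 V → ℕ} {α β ρ : ℕ} {v₀ v w : V} {e : Sym2 V}

lemma kempeGraph_adj :
    (kempeGraph E c α β).Adj v w ↔ s(v, w) ∈ E ∧ (c s(v, w) = α ∨ c s(v, w) = β) ∧ v ≠ w := by
  rw [kempeGraph, SimpleGraph.fromEdgeSet_adj]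
  exact and_assoc

lemma mem_kempeChain_self : v₀ ∈ kempeChain E c α β v₀ := SimpleGraph.Reachable.refl v₀

lemma mem_kempeChain_of_mem_edge (he : e ∈ E) (hce : c e = α ∨ c e = β) (hv : v ∈ e)
    (hw : w ∈ e) (hvc : v ∈ kempeChain E c α β v₀) : w ∈ kempeChain E c α β v₀ := by
  obtain ⟨z, rfl⟩ := Sym2.mem_iff_exists.1 hv
  rcases Sym2.mem_iff.1 hw with rfl | rfl
  · exact hvc
  · by_cases hvw : v = w
    · exact hvw ▸ hvc
    · exact hvc.trans (kempeGraph_adj.2 ⟨he, hce, hvw⟩).reachable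

lemma kempeSwap_of_mem (hv : v ∈ e) (hvc : v ∈ kempeChain E c α β v₀) :
    kempeSwap E c α β v₀ e = Equiv.swap α β (c e) :=
  if_pos ⟨v, hv, hvc⟩

lemma kempeSwap_of_ne_of_ne (hα : c e ≠ α) (hβ : c e ≠ β) : kempeSwap E c α β v₀ e = c e := by
  unfold kempeSwap
  split_ifs <;> simp [Equiv.swap_apply_of_ne_of_ne hα hβ]

lemma kempeSwap_of_notMem (he : e ∈ E) (hv : v ∈ e) (hvc : v ∉ kempeChain E c α β v₀) :
    kempeSwap E c α β v₀ e = c e := by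
  by_cases hce : c e = α ∨ c e = β
  · unfold kempeSwap
    rw [if_neg]
    rintro ⟨w, hw, hwc⟩
    exact hvc (mem_kempeChain_of_mem_edge he hce hw hv hwc)
  · push Not at hce
    exact kempeSwap_of_ne_of_ne hce.1 hce.2

lemma Equiv.swap_apply_lt_iff (hα : α < k) (hβ : β < k) : Equiv.swap α β ρ < k ↔ ρ < k := by
  rw [Equiv.swap_apply_def]
  split_ifs <;> omega

lemma IsEdgeColoringOn.kempeSwap (hc : IsEdgeColoringOn E k c) (hα : α < k) (hβ : β < k) :
    IsEdgeColoringOn E k (kempeSwap E c α β v₀) := by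
  refine ⟨fun e he => ?_, fun e₁ h₁ e₂ h₂ hne ⟨v, hv₁, hv₂⟩ => ?_⟩
  · unfold _root_.kempeSwap
    split_ifs
    exacts [(Equiv.swap_apply_lt_iff hα hβ).2 (hc.1 e he), hc.1 e he]
  · by_cases hvc : v ∈ kempeChain E c α β v₀
    · rw [kempeSwap_of_mem hv₁ hvc, kempeSwap_of_mem hv₂ hvc, Ne, (Equiv.injective _).eq_iff]
      exact hc.2 e₁ h₁ e₂ h₂ hne ⟨v, hv₁, hv₂⟩
    · rw [kempeSwap_of_notMem h₁ hv₁ hvc, kempeSwap_of_notMem h₂ hv₂ hvc]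
      exact hc.2 e₁ h₁ e₂ h₂ hne ⟨v, hv₁, hv₂⟩

lemma missingColors_kempeSwap_of_notMem (hv : v ∉ kempeChain E c α β v₀) :
    missingColors E k (kempeSwap E c α β v₀) v = missingColors E k c v :=
  missingColors_congr fun _ he hve => kempeSwap_of_notMem he hve hv

lemma mem_missingColors_kempeSwap_of_mem (hα : α < k) (hβ : β < k)
    (hv : v ∈ kempeChain E c α β v₀) :
    ρ ∈ missingColors E k (kempeSwap E c α β v₀) v ↔
      Equiv.swap α β ρ ∈ missingColors E k c v := by
  simp only [missingColors, Set.mem_ofPred_eq, Equiv.swap_apply_lt_iff hα hβ]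
  refine and_congr_right fun _ => forall₂_congr fun e _ => imp_congr_right fun hve => ?_
  rw [kempeSwap_of_mem hve hv, Ne, Equiv.swap_apply_eq_iff]

lemma mem_missingColors_kempeSwap_of_ne (hα : α < k) (hβ : β < k) (hρα : ρ ≠ α)
    (hρβ : ρ ≠ β) :
    ρ ∈ missingColors E k (kempeSwap E c α β v₀) v ↔ ρ ∈ missingColors E k c v := by
  by_cases hv : v ∈ kempeChain E c α β v₀
  · rw [mem_missingColors_kempeSwap_of_mem hα hβ hv, Equiv.swap_apply_of_ne_of_ne hρα hρβ]
  · rw [missingColors_kempeSwap_of_notMem hv]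

lemma IsEdgeColoringOn.ncard_neighborSet_kempeGraph_le (hc : IsEdgeColoringOn E k c) (v : V)
    {T : Set ℕ} (hT : T.Finite) (hcT : ∀ w, (kempeGraph E c α β).Adj v w → c s(v, w) ∈ T) :
    ((kempeGraph E c α β).neighborSet v).ncard ≤ T.ncard := by
  refine Set.ncard_le_ncard_of_injOn (fun w => c s(v, w)) hcT (fun w₁ h₁ w₂ h₂ h => ?_) hT
  have h₁ := kempeGraph_adj.1 h₁
  have h₂ := kempeGraph_adj.1 h₂
  rcases Sym2.eq_iff.1 (hc.eq_of_color_eq h₁.1 h₂.1 (Sym2.mem_mk_left v w₁)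
    (Sym2.mem_mk_left v w₂) h) with ⟨-, h⟩ | ⟨h, h'⟩
  exacts [h, h'.trans h]

lemma IsEdgeColoringOn.ncard_neighborSet_kempeGraph_le_two (hc : IsEdgeColoringOn E k c)
    (v : V) : ((kempeGraph E c α β).neighborSet v).ncard ≤ 2 :=
  (hc.ncard_neighborSet_kempeGraph_le v (Set.toFinite {α, β})
    fun _ hw => (kempeGraph_adj.1 hw).2.1).trans
      ((Set.ncard_insert_le α {β}).trans_eq (by rw [Set.ncard_singleton]))

lemma IsEdgeColoringOn.ncard_neighborSet_kempeGraph_le_one (hc : IsEdgeColoringOn E k c)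
    (hv : α ∈ missingColors E k c v ∨ β ∈ missingColors E k c v) :
    ((kempeGraph E c α β).neighborSet v).ncard ≤ 1 := by
  rcases hv with h | h
  · refine (hc.ncard_neighborSet_kempeGraph_le v (Set.finite_singleton β)
      fun w hw => ?_).trans (Set.ncard_singleton β).le
    obtain ⟨he, hce, -⟩ := kempeGraph_adj.1 hw
    exact hce.resolve_left (h.2 _ he (Sym2.mem_mk_left v w))
  · refine (hc.ncard_neighborSet_kempeGraph_le v (Set.finite_singleton α)
      fun w hw => ?_).trans (Set.ncard_singleton α).le
    obtain ⟨he, hce, -⟩ := kempeGraph_adj.1 hw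
    exact hce.resolve_right (h.2 _ he (Sym2.mem_mk_left v w))

end Kempe

lemma IsEdgeColoringOn.notMem_kempeChain [Finite V] {E : Set (Sym2 V)} {k : ℕ}
    {c : Sym2 V → ℕ} {α β : ℕ} {v₀ a b d : V} (hc : IsEdgeColoringOn E k c)
    (ha : a ∈ kempeChain E c α β v₀) (hb : b ∈ kempeChain E c α β v₀) (hab : a ≠ b)
    (hda : d ≠ a) (hdb : d ≠ b)
    (hma : α ∈ missingColors E k c a ∨ β ∈ missingColors E k c a)
    (hmb : α ∈ missingColors E k c b ∨ β ∈ missingColors E k c b)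
    (hmd : α ∈ missingColors E k c d ∨ β ∈ missingColors E k c d) :
    d ∉ kempeChain E c α β v₀ := by
  classical
  intro hd
  have := Fintype.ofFinite V
  set K := kempeGraph E c α β
  set C := K.connectedComponentMk v₀
  have hmem : ∀ {v}, v ∈ kempeChain E c α β v₀ → v ∈ C :=
    fun hv => ConnectedComponent.eq.2 hv.symm
  have hdeg : ∀ v (hv : v ∈ C), C.toSimpleGraph.degree ⟨v, hv⟩ = (K.neighborSet v).ncard := by
    intro v hv
    calc _ = K.degree v := by
          convert degree_induce_of_neighborSet_subset (G := K) (s := C.supp) (v := ⟨v, hv⟩)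
            fun w (hw : K.Adj v w) => C.mem_supp_of_adj_mem_supp hv hw using 2
          all_goals rfl
      _ = _ := by rw [← card_neighborSet_eq_degree, Set.ncard_eq_toFinset_card', Set.toFinset_card]
  have hpath := C.connected_toSimpleGraph.eq_or_eq_of_degree_le_one
    (fun v => (hdeg v v.2).trans_le (hc.ncard_neighborSet_kempeGraph_le_two v))
    (a := ⟨a, hmem ha⟩) (b := ⟨b, hmem hb⟩) (d := ⟨d, hmem hd⟩) (by simpa using hab)
    ((hdeg a _).trans_le (hc.ncard_neighborSet_kempeGraph_le_one hma))
    ((hdeg b _).trans_le (hc.ncard_neighborSet_kempeGraph_le_one hmb))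
    ((hdeg d _).trans_le (hc.ncard_neighborSet_kempeGraph_le_one hmd))
  simp only [Subtype.mk.injEq] at hpath
  exact hpath.elim hda hdb

lemma Set.mem_or_mem_of_ncard_le {α : Type*} {A B S : Set α} (hS : S.Finite) (hA : A ⊆ S)
    (hB : B ⊆ S) (hAB : Disjoint A B) (hcard : S.ncard ≤ A.ncard + B.ncard) {a : α}
    (ha : a ∈ S) : a ∈ A ∨ a ∈ B := by
  rw [← Set.mem_union, Set.eq_of_subset_of_ncard_le (Set.union_subset hA hB)
    (by rwa [Set.ncard_union_eq hAB (hS.subset hA) (hS.subset hB)]) hS]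
  exact ha

lemma ncard_incidenceSet_eq_deg (G : SimpleGraph V) (v : V) :
    (G.incidenceSet v).ncard = deg G v := by
  classical
  rw [deg, ← Nat.card_coe_set_eq, ← Nat.card_coe_set_eq]
  exact Nat.card_congr (G.incidenceSetEquivNeighborSet v)

section Counting

variable {G : SimpleGraph V} {k : ℕ} {c : Sym2 V → ℕ} {v x y : V} {f : Sym2 V}

lemma IsEdgeColoringOn.deg_le (hc : IsEdgeColoringOn G.edgeSet k c) (v : V) : deg G v ≤ k := by
  rw [← ncard_incidenceSet_eq_deg, ← hc.ncard_add_ncard_missingColors v]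
  exact Nat.le_add_right _ _

lemma IsEdgeColoringOn.ncard_missingColors_of_notMem
    (hc : IsEdgeColoringOn (G.edgeSet \ {f}) k c) (hv : v ∉ f) :
    (missingColors (G.edgeSet \ {f}) k c v).ncard + deg G v = k := by
  have hI : {e ∈ G.edgeSet \ {f} | v ∈ e} = G.incidenceSet v := by
    ext e
    simp only [incidenceSet, Set.mem_sdiff, Set.mem_singleton_iff, Set.mem_ofPred_eq]
    exact ⟨fun h => ⟨h.1.1, h.2⟩, fun h => ⟨⟨h.1, by rintro rfl; exact hv h.2⟩, h.2⟩⟩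
  rw [← ncard_incidenceSet_eq_deg, ← hI, add_comm]
  exact hc.ncard_add_ncard_missingColors v

lemma IsEdgeColoringOn.ncard_missingColors_of_mem [Finite V]
    (hc : IsEdgeColoringOn (G.edgeSet \ {f}) k c) (hf : f ∈ G.edgeSet) (hv : v ∈ f) :
    (missingColors (G.edgeSet \ {f}) k c v).ncard + deg G v = k + 1 := by
  have hI : {e ∈ G.edgeSet \ {f} | v ∈ e} = G.incidenceSet v \ {f} := by
    ext e
    simp only [incidenceSet, Set.mem_sdiff, Set.mem_singleton_iff, Set.mem_ofPred_eq]
    tauto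
  have hcount := hc.ncard_add_ncard_missingColors v
  have hpos : 0 < deg G v := by
    rw [← ncard_incidenceSet_eq_deg]
    exact (Set.ncard_pos (Set.toFinite _)).2 ⟨f, hf, hv⟩
  rw [hI, Set.ncard_sdiff_singleton_of_mem (show f ∈ G.incidenceSet v from ⟨hf, hv⟩),
    ncard_incidenceSet_eq_deg] at hcount
  omega

lemma IsEdgeColoringOn.disjoint_missingColors (hc : IsEdgeColoringOn (G.edgeSet \ {s(x, y)}) k c)
    (hk : ∀ c, ¬ IsEdgeColoringOn G.edgeSet k c) (hxy : G.Adj x y) :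
    Disjoint (missingColors (G.edgeSet \ {s(x, y)}) k c x)
      (missingColors (G.edgeSet \ {s(x, y)}) k c y) := by
  classical
  refine Set.disjoint_left.2 fun a hx hy => hk (Function.update c s(x, y) a) ?_
  have := hc.update_insert hx hy
  rwa [Set.insert_sdiff_singleton, Set.insert_eq_of_mem (G.mem_edgeSet.2 hxy)] at this

lemma IsEdgeColoringOn.add_two_le_deg_add_deg [Finite V]
    (hc : IsEdgeColoringOn (G.edgeSet \ {s(x, y)}) k c)
    (hk : ∀ c, ¬ IsEdgeColoringOn G.edgeSet k c) (hxy : G.Adj x y) :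
    k + 2 ≤ deg G x + deg G y := by
  have hx := hc.ncard_missingColors_of_mem hxy (Sym2.mem_mk_left x y)
  have hy := hc.ncard_missingColors_of_mem hxy (Sym2.mem_mk_right x y)
  have hunion := Set.ncard_le_ncard (Set.union_subset (fun _ h => h.1) (fun _ h => h.1) :
    missingColors (G.edgeSet \ {s(x, y)}) k c x ∪ missingColors (G.edgeSet \ {s(x, y)}) k c y
      ⊆ Set.Iio k)
  rw [Set.ncard_union_eq (hc.disjoint_missingColors hk hxy) (finite_missingColors _)
    (finite_missingColors _), Set.ncard_Iio_nat] at hunion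
  omega

lemma IsEdgeColoringOn.mem_missingColors_or_mem [Finite V]
    (hc : IsEdgeColoringOn (G.edgeSet \ {s(x, y)}) k c)
    (hk : ∀ c, ¬ IsEdgeColoringOn G.edgeSet k c) (hxy : G.Adj x y)
    (hd : deg G x + deg G y = k + 2) {ρ : ℕ} (hρ : ρ < k) :
    ρ ∈ missingColors (G.edgeSet \ {s(x, y)}) k c x ∨
      ρ ∈ missingColors (G.edgeSet \ {s(x, y)}) k c y := by
  have hx := hc.ncard_missingColors_of_mem hxy (Sym2.mem_mk_left x y)
  have hy := hc.ncard_missingColors_of_mem hxy (Sym2.mem_mk_right x y)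
  refine Set.mem_or_mem_of_ncard_le (Set.finite_Iio k) (fun _ h => h.1) (fun _ h => h.1)
    (hc.disjoint_missingColors hk hxy) ?_ hρ
  rw [Set.ncard_Iio_nat]
  omega

end Counting

structure IsEdgeCritical (G : SimpleGraph V) (k : ℕ) : Prop where
  deg_le : ∀ v, deg G v ≤ k
  not_colorable : ∀ c, ¬ IsEdgeColoringOn G.edgeSet k c
  colorable_sdiff : ∀ f ∈ G.edgeSet, ∃ c, IsEdgeColoringOn (G.edgeSet \ {f}) k c

namespace IsEdgeCritical

variable {G : SimpleGraph V} {k : ℕ} {c : Sym2 V → ℕ} {p q x y w z : V} {α δ θ : ℕ}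

lemma mem_kempeChain (hG : IsEdgeCritical G k) (hpq : G.Adj p q)
    (hc : IsEdgeColoringOn (G.edgeSet \ {s(p, q)}) k c)
    (hα : α ∈ missingColors (G.edgeSet \ {s(p, q)}) k c p)
    (hθ : θ ∈ missingColors (G.edgeSet \ {s(p, q)}) k c q) :
    q ∈ kempeChain (G.edgeSet \ {s(p, q)}) c α θ p := by
  by_contra hq
  set E := G.edgeSet \ {s(p, q)}
  have hθp : θ ∈ missingColors E k (kempeSwap E c α θ p) p := by
    rw [mem_missingColors_kempeSwap_of_mem hα.1 hθ.1 mem_kempeChain_self,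
      Equiv.swap_apply_right]
    exact hα
  have hθq : θ ∈ missingColors E k (kempeSwap E c α θ p) q := by
    rwa [missingColors_kempeSwap_of_notMem hq]
  exact Set.disjoint_left.1 ((hc.kempeSwap hα.1 hθ.1).disjoint_missingColors
    hG.not_colorable hpq) hθp hθq

variable [Finite V]

lemma exists_kempe_recoloring (hG : IsEdgeCritical G k) (hpq : G.Adj p q)
    (hc : IsEdgeColoringOn (G.edgeSet \ {s(p, q)}) k c) (hzp : z ≠ p) (hzq : z ≠ q)
    (hδp : δ ∈ missingColors (G.edgeSet \ {s(p, q)}) k c p)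
    (hδz : δ ∈ missingColors (G.edgeSet \ {s(p, q)}) k c z)
    (hθq : θ ∈ missingColors (G.edgeSet \ {s(p, q)}) k c q) :
    ∃ c', IsEdgeColoringOn (G.edgeSet \ {s(p, q)}) k c' ∧
      θ ∈ missingColors (G.edgeSet \ {s(p, q)}) k c' z ∧
      ∀ e ∈ G.edgeSet \ {s(p, q)}, p ∈ e ∨ q ∈ e → c' e = c e := by
  have hq := hG.mem_kempeChain hpq hc hδp hθq
  have hz := hc.notMem_kempeChain mem_kempeChain_self hq hpq.ne hzp hzq (Or.inl hδp)
    (Or.inr hθq) (Or.inl hδz)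
  have hpz : p ∉ kempeChain _ c δ θ z := fun h => hz (SimpleGraph.Reachable.symm h)
  have hqz : q ∉ kempeChain _ c δ θ z := fun h => hz (SimpleGraph.Reachable.trans hq h.symm)
  refine ⟨kempeSwap _ c δ θ z, hc.kempeSwap hδp.1 hθq.1, ?_, ?_⟩
  · rw [mem_missingColors_kempeSwap_of_mem hδp.1 hθq.1 mem_kempeChain_self,
      Equiv.swap_apply_right]
    exact hδz
  · rintro e he (hpe | hqe)
    exacts [kempeSwap_of_notMem he hpe hpz, kempeSwap_of_notMem he hqe hqz]

lemma exists_mem_missingColors_inter (hG : IsEdgeCritical G k) (hxy : G.Adj x y)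
    (hd : deg G x + deg G y = k + 2) (hzx : z ≠ x) (hzy : z ≠ y) (hz : deg G z < k) :
    ∃ c, IsEdgeColoringOn (G.edgeSet \ {s(x, y)}) k c ∧ ∃ α,
      α ∈ missingColors (G.edgeSet \ {s(x, y)}) k c x ∧
      α ∈ missingColors (G.edgeSet \ {s(x, y)}) k c z := by
  obtain ⟨c, hc⟩ := hG.colorable_sdiff s(x, y) hxy
  obtain ⟨δ, hδz⟩ :=
      Set.nonempty_of_ncard_ne_zero (s := missingColors (G.edgeSet \ {s(x, y)}) k c z) <| by
    have := hc.ncard_missingColors_of_notMem (v := z) (by simp [hzx, hzy])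
    omega
  by_cases hδx : δ ∈ missingColors (G.edgeSet \ {s(x, y)}) k c x
  · exact ⟨c, hc, δ, hδx, hδz⟩
  have hδy := (hc.mem_missingColors_or_mem hG.not_colorable hxy hd hδz.1).resolve_left hδx
  obtain ⟨α, hαx⟩ :=
      Set.nonempty_of_ncard_ne_zero (s := missingColors (G.edgeSet \ {s(x, y)}) k c x) <| by
    have := hc.ncard_missingColors_of_mem hxy (Sym2.mem_mk_left x y)
    have := hG.deg_le x
    omega
  rw [Sym2.eq_swap] at hc hδy hδz hαx ⊢
  obtain ⟨c', hc', hαz, hagree⟩ := hG.exists_kempe_recoloring hxy.symm hc hzy hzx hδy hδz hαx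
  refine ⟨c', hc', α, ?_, hαz⟩
  rwa [missingColors_congr fun e he hxe => hagree e he (Or.inr hxe)]

lemma deg_eq_of_adj (hG : IsEdgeCritical G k) (hxy : G.Adj x y)
    (hd : deg G x + deg G y = k + 2) (hxw : G.Adj x w) (hwy : w ≠ y) : deg G w = k := by
  classical
  refine (hG.deg_le w).antisymm (not_lt.1 fun hw => ?_)
  obtain ⟨c, hc, α, hαx, hαw⟩ := hG.exists_mem_missingColors_inter hxy hd hxw.ne' hwy hw
  have hxw' : s(x, w) ∈ G.edgeSet \ {s(x, y)} := ⟨hxw, by simp [hwy, hxy.ne]⟩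
  set E := G.edgeSet \ {s(x, y)}
  have hβx := color_notMem_missingColors (k := k) (c := c) hxw' (Sym2.mem_mk_left x w)
  have hβy := (hc.mem_missingColors_or_mem hG.not_colorable hxy hd (hc.1 _ hxw')).resolve_left hβx
  -- recolouring `xw` with `α` frees its old colour at `x`, where `y` misses it too
  have hβx' : c s(x, w) ∈ missingColors E k (Function.update c s(x, w) α) x := by
    rw [hc.missingColors_update_of_mem hxw' (Sym2.mem_mk_left x w)]
    exact ⟨Set.mem_insert _ _, fun h => hβx (h ▸ hαx)⟩
  have hβy' : c s(x, w) ∈ missingColors E k (Function.update c s(x, w) α) y := by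
    rwa [missingColors_update_of_notMem hxw' (by simp [hxy.ne', hwy.symm])]
  exact Set.disjoint_left.1 ((hc.update hxw' hαx hαw).disjoint_missingColors
    hG.not_colorable hxy) hβx' hβy'

end IsEdgeCritical

structure IsPairedColoring (G : SimpleGraph V) (k : ℕ) (x y w u : V) (γ : ℕ)
    (c : Sym2 V → ℕ) : Prop where
  adj_xy : G.Adj x y
  adj_xw : G.Adj x w
  adj_wu : G.Adj w u
  w_ne_y : w ≠ y
  u_ne_x : u ≠ x
  u_ne_y : u ≠ y
  coloring : IsEdgeColoringOn (G.edgeSet \ {s(x, w)}) k c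
  color_eq : c s(x, y) = c s(w, u)
  missing_w : γ ∈ missingColors (G.edgeSet \ {s(x, w)}) k c w
  missing_u : γ ∈ missingColors (G.edgeSet \ {s(x, w)}) k c u

lemma IsEdgeColoringOn.exists_isPairedColoring {G : SimpleGraph V} {k : ℕ} {c : Sym2 V → ℕ}
    {x y w u : V} (hc : IsEdgeColoringOn (G.edgeSet \ {s(x, y)}) k c) (hxy : G.Adj x y)
    (hxw : G.Adj x w) (hwu : G.Adj w u) (hwy : w ≠ y) (hux : u ≠ x) (huy : u ≠ y)
    (hy : c s(x, w) ∈ missingColors (G.edgeSet \ {s(x, y)}) k c y)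
    (hu : c s(x, w) ∈ missingColors (G.edgeSet \ {s(x, y)}) k c u) :
    ∃ γ c', IsPairedColoring G k x y w u γ c' := by
  classical
  set E := G.edgeSet \ {s(x, y)}
  have hxwE : s(x, w) ∈ E := ⟨hxw, by simp [hwy, hxy.ne]⟩
  set β := c s(x, w)
  -- move `β` from `xw` to `xy`, then recolour `wu` with `β`, which is now missing at `w`
  have hE : insert s(x, y) (E \ {s(x, w)}) = G.edgeSet \ {s(x, w)} := by
    rw [Set.sdiff_sdiff_comm, Set.insert_sdiff_singleton,
      Set.insert_eq_of_mem (show s(x, y) ∈ G.edgeSet \ {s(x, w)} from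
        ⟨hxy, by simp [hwy.symm, hxy.ne']⟩)]
  have hc₁ := hc.update_insert_sdiff hxwE (Sym2.mem_mk_left x w) hy
    (by simp [hxy.ne', hwy.symm])
  rw [hE] at hc₁
  set c₁ := Function.update c s(x, y) β
  have hβw₁ : β ∈ missingColors (G.edgeSet \ {s(x, w)}) k c₁ w := by
    rw [← hE, missingColors_insert_update_of_notMem (by simp [hxw.ne', hwy]),
      hc.missingColors_sdiff_singleton_of_mem hxwE (Sym2.mem_mk_right x w)]
    exact Set.mem_insert _ _
  have hβu₁ : β ∈ missingColors (G.edgeSet \ {s(x, w)}) k c₁ u := by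
    rwa [← hE, missingColors_insert_update_of_notMem (by simp [hux, huy]),
      missingColors_sdiff_singleton_of_notMem (by simp [hux, hwu.ne'])]
  have hwuE : s(w, u) ∈ G.edgeSet \ {s(x, w)} := ⟨hwu, by simp [hxw.ne', hux]⟩
  have hγ : c₁ s(w, u) ≠ β := fun hγ =>
    color_notMem_missingColors hwuE (Sym2.mem_mk_right w u) (hγ ▸ hβu₁)
  refine ⟨c₁ s(w, u), Function.update c₁ s(w, u) β, hxy, hxw, hwu, hwy, hux, huy,
    hc₁.update hwuE hβw₁ hβu₁, ?_, ?_, ?_⟩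
  · rw [Function.update_self, Function.update_of_ne (by simp [hxw.ne, hux.symm])]
    exact Function.update_self _ _ _
  · rw [hc₁.missingColors_update_of_mem hwuE (Sym2.mem_mk_left w u)]
    exact ⟨Set.mem_insert _ _, hγ⟩
  · rw [hc₁.missingColors_update_of_mem hwuE (Sym2.mem_mk_right w u)]
    exact ⟨Set.mem_insert _ _, hγ⟩

namespace IsPairedColoring

variable {G : SimpleGraph V} {k : ℕ} {x y w u : V} {γ ρ : ℕ} {c : Sym2 V → ℕ}

lemma mem_edgeSet_xy (h : IsPairedColoring G k x y w u γ c) :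
    s(x, y) ∈ G.edgeSet \ {s(x, w)} :=
  ⟨h.adj_xy, by simp [h.w_ne_y.symm, h.adj_xy.ne']⟩

lemma mem_edgeSet_wu (h : IsPairedColoring G k x y w u γ c) :
    s(w, u) ∈ G.edgeSet \ {s(x, w)} :=
  ⟨h.adj_wu, by simp [h.adj_xw.ne', h.u_ne_x]⟩

lemma disjoint_missingColors_xy (h : IsPairedColoring G k x y w u γ c) (hG : IsEdgeCritical G k) :
    Disjoint (missingColors (G.edgeSet \ {s(x, w)}) k c x)
      (missingColors (G.edgeSet \ {s(x, w)}) k c y) := by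
  classical
  set E := G.edgeSet \ {s(x, w)}
  refine Set.disjoint_left.2 fun σ hσx hσy => ?_
  -- recolour `xy` with `σ` and `wu` with `γ`: the common old colour is then missing at `x` and `w`
  set c₁ := Function.update c s(x, y) σ
  have hc₁ := h.coloring.update h.mem_edgeSet_xy hσx hσy
  have hγw₁ : γ ∈ missingColors E k c₁ w := by
    rw [missingColors_update_of_notMem h.mem_edgeSet_xy (by simp [h.adj_xw.ne', h.w_ne_y])]
    exact h.missing_w
  have hγu₁ : γ ∈ missingColors E k c₁ u := by
    rw [missingColors_update_of_notMem h.mem_edgeSet_xy (by simp [h.u_ne_x, h.u_ne_y])]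
    exact h.missing_u
  have hσ : c s(x, y) ≠ σ := fun hσ =>
    color_notMem_missingColors h.mem_edgeSet_xy (Sym2.mem_mk_left x y) (hσ ▸ hσx)
  have hγ : c s(w, u) ≠ γ := fun hγ =>
    color_notMem_missingColors h.mem_edgeSet_wu (Sym2.mem_mk_right w u) (hγ ▸ h.missing_u)
  have hx : c s(x, y) ∈ missingColors E k (Function.update c₁ s(w, u) γ) x := by
    rw [missingColors_update_of_notMem h.mem_edgeSet_wu (by simp [h.adj_xw.ne, h.u_ne_x.symm]),
      h.coloring.missingColors_update_of_mem h.mem_edgeSet_xy (Sym2.mem_mk_left x y)]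
    exact ⟨Set.mem_insert _ _, hσ⟩
  have hw : c s(x, y) ∈ missingColors E k (Function.update c₁ s(w, u) γ) w := by
    rw [hc₁.missingColors_update_of_mem h.mem_edgeSet_wu (Sym2.mem_mk_left w u),
      Function.update_of_ne (by simp [h.adj_xw.ne', h.w_ne_y]), h.color_eq]
    exact ⟨Set.mem_insert _ _, hγ⟩
  exact Set.disjoint_left.1 ((hc₁.update h.mem_edgeSet_wu hγw₁ hγu₁).disjoint_missingColors
    hG.not_colorable h.adj_xw) hx hw

lemma mem_missingColors_or_mem [Finite V] (h : IsPairedColoring G k x y w u γ c)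
    (hG : IsEdgeCritical G k) (hd : deg G x + deg G y = k + 2) (hρ : ρ < k)
    (hρxy : ρ ≠ c s(x, y)) :
    ρ ∈ missingColors (G.edgeSet \ {s(x, w)}) k c x ∨
      ρ ∈ missingColors (G.edgeSet \ {s(x, w)}) k c y := by
  have hx := h.coloring.ncard_missingColors_of_mem h.adj_xw (Sym2.mem_mk_left x w)
  have hy := h.coloring.ncard_missingColors_of_notMem (v := y)
    (by simp [h.adj_xy.ne', h.w_ne_y.symm])
  have hxy := h.coloring.1 _ h.mem_edgeSet_xy
  have hsub : ∀ v ∈ s(x, y), missingColors (G.edgeSet \ {s(x, w)}) k c v ⊆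
      Set.Iio k \ {c s(x, y)} := fun v hv ρ hρ =>
    ⟨hρ.1, fun hρxy => color_notMem_missingColors h.mem_edgeSet_xy hv (hρxy ▸ hρ)⟩
  refine Set.mem_or_mem_of_ncard_le (Set.toFinite _) (hsub x (Sym2.mem_mk_left x y))
    (hsub y (Sym2.mem_mk_right x y)) (h.disjoint_missingColors_xy hG) ?_ ⟨hρ, hρxy⟩
  -- `(k + 1 - d(x)) + (k - d(y)) = k - 1` colours are missing at `x` or `y`
  rw [Set.ncard_sdiff_singleton_of_mem (Set.mem_Iio.2 hxy), Set.ncard_Iio_nat]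
  omega

lemma disjoint_missingColors_xu [Finite V] (h : IsPairedColoring G k x y w u γ c)
    (hG : IsEdgeCritical G k) (hd : deg G x + deg G y = k + 2) :
    Disjoint (missingColors (G.edgeSet \ {s(x, w)}) k c x)
      (missingColors (G.edgeSet \ {s(x, w)}) k c u) := by
  set E := G.edgeSet \ {s(x, w)}
  refine Set.disjoint_left.2 fun ε hεx hεu => ?_
  have hγx : γ ∉ missingColors E k c x := fun hγx =>
    Set.disjoint_left.1 (h.coloring.disjoint_missingColors hG.not_colorable h.adj_xw) hγx
      h.missing_w
  have hγy : γ ∈ missingColors E k c y :=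
    (h.mem_missingColors_or_mem hG hd h.missing_w.1 fun hγ => color_notMem_missingColors
      h.mem_edgeSet_wu (Sym2.mem_mk_right w u) (h.color_eq ▸ hγ ▸ h.missing_u)).resolve_left hγx
  -- swap `ε` and `γ` on the chain through `x` and `w`; it avoids `y` and `u`
  have hw := hG.mem_kempeChain h.adj_xw h.coloring hεx h.missing_w
  have hy : y ∉ kempeChain E c ε γ x := h.coloring.notMem_kempeChain mem_kempeChain_self hw
    h.adj_xw.ne h.adj_xy.ne' h.w_ne_y.symm (Or.inl hεx) (Or.inr h.missing_w) (Or.inr hγy)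
  have hu : u ∉ kempeChain E c ε γ x := h.coloring.notMem_kempeChain mem_kempeChain_self hw
    h.adj_xw.ne h.u_ne_x h.adj_wu.ne' (Or.inl hεx) (Or.inr h.missing_w) (Or.inl hεu)
  have h' : IsPairedColoring G k x y w u ε (kempeSwap E c ε γ x) :=
    { h with
      coloring := h.coloring.kempeSwap hεx.1 h.missing_w.1
      color_eq := by
        rw [kempeSwap_of_notMem h.mem_edgeSet_xy (Sym2.mem_mk_right x y) hy,
          kempeSwap_of_notMem h.mem_edgeSet_wu (Sym2.mem_mk_right w u) hu, h.color_eq]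
      missing_w := by
        rw [mem_missingColors_kempeSwap_of_mem hεx.1 h.missing_w.1 hw, Equiv.swap_apply_left]
        exact h.missing_w
      missing_u := by rwa [missingColors_kempeSwap_of_notMem hu] }
  have hγx' : γ ∈ missingColors E k (kempeSwap E c ε γ x) x := by
    rw [mem_missingColors_kempeSwap_of_mem hεx.1 h.missing_w.1 mem_kempeChain_self,
      Equiv.swap_apply_right]
    exact hεx
  have hγy' : γ ∈ missingColors E k (kempeSwap E c ε γ x) y := by
    rwa [missingColors_kempeSwap_of_notMem hy]
  exact Set.disjoint_left.1 (h'.disjoint_missingColors_xy hG) hγx' hγy'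

lemma kempeSwap_of_ne (h : IsPairedColoring G k x y w u γ c) {α β : ℕ} (hα : α < k) (hβ : β < k)
    (hxyα : c s(x, y) ≠ α) (hxyβ : c s(x, y) ≠ β) (hγα : γ ≠ α) (hγβ : γ ≠ β) (v₀ : V) :
    IsPairedColoring G k x y w u γ (kempeSwap (G.edgeSet \ {s(x, w)}) c α β v₀) :=
  { h with
    coloring := h.coloring.kempeSwap hα hβ
    color_eq := by
      rw [kempeSwap_of_ne_of_ne hxyα hxyβ, kempeSwap_of_ne_of_ne (h.color_eq ▸ hxyα)
        (h.color_eq ▸ hxyβ), h.color_eq]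
    missing_w := (mem_missingColors_kempeSwap_of_ne hα hβ hγα hγβ).2 h.missing_w
    missing_u := (mem_missingColors_kempeSwap_of_ne hα hβ hγα hγβ).2 h.missing_u }

lemma eq_of_mem_missingColors_u_of_mem_y [Finite V] (h : IsPairedColoring G k x y w u γ c)
    (hG : IsEdgeCritical G k) (hd : deg G x + deg G y = k + 2) {ε : ℕ}
    (hεu : ε ∈ missingColors (G.edgeSet \ {s(x, w)}) k c u)
    (hεy : ε ∈ missingColors (G.edgeSet \ {s(x, w)}) k c y) : ε = γ := by
  by_contra hεγ
  have hx := h.coloring.ncard_missingColors_of_mem h.adj_xw (Sym2.mem_mk_left x w)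
  have := hG.deg_le x
  set E := G.edgeSet \ {s(x, w)}
  obtain ⟨α, hαx⟩ := Set.nonempty_of_ncard_ne_zero (s := missingColors E k c x) (by omega)
  have hγα : γ ≠ α := fun hγα => Set.disjoint_left.1
    (h.coloring.disjoint_missingColors hG.not_colorable h.adj_xw) (hγα ▸ hαx) h.missing_w
  have hα : c s(x, y) ≠ α := fun hα =>
    color_notMem_missingColors h.mem_edgeSet_xy (Sym2.mem_mk_left x y) (hα ▸ hαx)
  have hε : c s(x, y) ≠ ε := fun hε =>
    color_notMem_missingColors h.mem_edgeSet_xy (Sym2.mem_mk_right x y) (hε ▸ hεy)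
  -- swapping `α` and `ε` on the chain of `u` keeps the pairing, and then `x` shares a missing
  -- colour with `y` (if the chain reaches `x`) or with `u` (if it does not)
  have h' := h.kempeSwap_of_ne hαx.1 hεu.1 hα hε hγα (Ne.symm hεγ) u
  by_cases hxu : x ∈ kempeChain E c α ε u
  · have hyu : y ∉ kempeChain E c α ε u := h.coloring.notMem_kempeChain hxu mem_kempeChain_self
      h.u_ne_x.symm h.adj_xy.ne' h.u_ne_y.symm (Or.inl hαx) (Or.inr hεu) (Or.inr hεy)
    have hεx' : ε ∈ missingColors E k (kempeSwap E c α ε u) x := by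
      rw [mem_missingColors_kempeSwap_of_mem hαx.1 hεu.1 hxu, Equiv.swap_apply_right]
      exact hαx
    have hεy' : ε ∈ missingColors E k (kempeSwap E c α ε u) y := by
      rwa [missingColors_kempeSwap_of_notMem hyu]
    exact Set.disjoint_left.1 (h'.disjoint_missingColors_xy hG) hεx' hεy'
  · have hαx' : α ∈ missingColors E k (kempeSwap E c α ε u) x := by
      rwa [missingColors_kempeSwap_of_notMem hxu]
    have hαu' : α ∈ missingColors E k (kempeSwap E c α ε u) u := by
      rw [mem_missingColors_kempeSwap_of_mem hαx.1 hεu.1 mem_kempeChain_self,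
        Equiv.swap_apply_left]
      exact hεu
    exact Set.disjoint_left.1 (h'.disjoint_missingColors_xu hG hd) hαx' hαu'

lemma lt_deg_add_two [Finite V] (h : IsPairedColoring G k x y w u γ c) (hG : IsEdgeCritical G k)
    (hd : deg G x + deg G y = k + 2) : k < deg G u + 2 := by
  by_contra! hu
  have hu' := h.coloring.ncard_missingColors_of_notMem (v := u) (by simp [h.u_ne_x, h.adj_wu.ne'])
  obtain ⟨ε, hεu, hεγ⟩ :=
    Set.exists_ne_of_one_lt_ncard (s := missingColors (G.edgeSet \ {s(x, w)}) k c u) (by omega) γ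
  have hεx : ε ∉ missingColors (G.edgeSet \ {s(x, w)}) k c x := fun hεx =>
    Set.disjoint_left.1 (h.disjoint_missingColors_xu hG hd) hεx hεu
  have hεxy : ε ≠ c s(x, y) := fun hε => color_notMem_missingColors h.mem_edgeSet_wu
    (Sym2.mem_mk_right w u) (h.color_eq ▸ hε ▸ hεu)
  exact hεγ (h.eq_of_mem_missingColors_u_of_mem_y hG hd hεu
    ((h.mem_missingColors_or_mem hG hd hεu.1 hεxy).resolve_left hεx))

end IsPairedColoring

namespace IsEdgeCritical

variable [Finite V] {G : SimpleGraph V} {k : ℕ} {x y w u : V}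

lemma exists_isPairedColoring (hG : IsEdgeCritical G k) (hxy : G.Adj x y)
    (hd : deg G x + deg G y = k + 2) (hxw : G.Adj x w) (hwu : G.Adj w u) (hwy : w ≠ y)
    (hux : u ≠ x) (huy : u ≠ y) (hu : deg G u < k) :
    ∃ γ c, IsPairedColoring G k x y w u γ c := by
  obtain ⟨c₀, hc₀, α, hαx, hαu⟩ := hG.exists_mem_missingColors_inter hxy hd hux huy hu
  have hxwE : s(x, w) ∈ G.edgeSet \ {s(x, y)} := ⟨hxw, by simp [hwy, hxy.ne]⟩
  have hβy₀ := (hc₀.mem_missingColors_or_mem hG.not_colorable hxy hd (hc₀.1 _ hxwE)).resolve_left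
    (color_notMem_missingColors hxwE (Sym2.mem_mk_left x w))
  -- a swap at `u` makes `u` miss the colour of `xw`, keeping the edges at `x` and `y`
  obtain ⟨c, hc, hβu, hagree⟩ := hG.exists_kempe_recoloring hxy hc₀ hux huy hαx hαu hβy₀
  have hβ : c s(x, w) = c₀ s(x, w) := hagree _ hxwE (Or.inl (Sym2.mem_mk_left x w))
  refine hc.exists_isPairedColoring hxy hxw hwu hwy hux huy ?_ (hβ ▸ hβu)
  rw [missingColors_congr fun e he hye => hagree e he (Or.inr hye), hβ]
  exact hβy₀

lemma le_deg_add_one (hG : IsEdgeCritical G k) (hxy : G.Adj x y)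
    (hd : deg G x + deg G y = k + 2) (hxw : G.Adj x w) (hwu : G.Adj w u) (hux : u ≠ x)
    (huy : u ≠ y) : k ≤ deg G u + 1 := by
  by_cases hwy : w = y
  · subst hwy
    have := hG.deg_eq_of_adj hxy.symm (by omega) hwu hux
    omega
  by_contra! hu
  obtain ⟨γ, c, h⟩ := hG.exists_isPairedColoring hxy hd hxw hwu hwy hux huy (by omega)
  have := h.lt_deg_add_two hG hd
  omega

end IsEdgeCritical

lemma exists_isProperEdgeColoring_edgeChromaticNumber_s5 {W : Type*} [Finite W]
    (H : SimpleGraph W) : ∃ c, IsProperEdgeColoring H (edgeChromaticNumber H) c := by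
  refine Nat.sInf_mem (s := {n | ∃ c, IsProperEdgeColoring H n c}) ?_
  obtain ⟨n, ⟨e⟩⟩ := Finite.exists_equiv_fin (Sym2 W)
  exact ⟨n, fun f => e f, fun f _ => (e f).isLt,
    fun f₁ _ f₂ _ hne _ h => hne (e.injective (Fin.ext h))⟩

namespace IsCritical

variable [Finite V] {G : SimpleGraph V} {x y : V}

lemma exists_isEdgeColoringOn_sdiff (hG : IsCritical G) {f : Sym2 V} (hf : f ∈ G.edgeSet) :
    ∃ c, IsEdgeColoringOn (G.edgeSet \ {f}) (edgeChromaticNumber G - 1) c := by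
  set H := (⊤ : G.Subgraph).deleteEdges {f}
  have hH : H ≠ ⊤ := fun h => by
    induction f using Sym2.ind with
    | h a b =>
      have : H.Adj a b := h ▸ (Subgraph.top_adj.2 hf : (⊤ : G.Subgraph).Adj a b)
      simp [H] at this
  obtain ⟨c, hc⟩ := exists_isProperEdgeColoring_edgeChromaticNumber_s5 H.coe
  let ι : V → H.verts := fun v => ⟨v, by simp [H]⟩
  have hmap : ∀ e ∈ G.edgeSet \ {f}, e.map ι ∈ H.coe.edgeSet := by
    rintro ⟨a, b⟩ ⟨hab, hne⟩
    simpa [H, ι] using ⟨hab, hne⟩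
  refine ⟨fun e => c (e.map ι), ?_⟩
  refine IsEdgeColoringOn.mono_colors ⟨fun e he => hc.1 _ (hmap e he),
    fun e₁ h₁ e₂ h₂ hne ⟨v, hv₁, hv₂⟩ => hc.2 _ (hmap e₁ h₁) _ (hmap e₂ h₂)
      (fun h => hne (Sym2.map.injective (fun a b h => congrArg Subtype.val h) h))
      ⟨ι v, Sym2.mem_map.2 ⟨v, hv₁, rfl⟩, Sym2.mem_map.2 ⟨v, hv₂, rfl⟩⟩⟩ ?_
  have := hG.2 H hH
  omega

lemma isEdgeCritical (hG : IsCritical G) (hxy : G.Adj x y)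
    (hd : deg G x + deg G y = maxDeg G + 2) : IsEdgeCritical G (maxDeg G) := by
  have hdeg : ∀ v, deg G v ≤ maxDeg G := fun v =>
    le_csSup (Set.finite_range (deg G)).bddAbove ⟨v, rfl⟩
  have hk : ∀ {k}, k < edgeChromaticNumber G → ∀ c, ¬ IsEdgeColoringOn G.edgeSet k c :=
    fun hk c hc => Nat.notMem_of_lt_sInf hk ⟨c, hc⟩
  obtain ⟨c, hc⟩ := exists_isProperEdgeColoring_edgeChromaticNumber_s5 G
  have hΔ : maxDeg G ≤ edgeChromaticNumber G :=
    csSup_le ⟨_, x, rfl⟩ (by rintro _ ⟨v, rfl⟩; exact (isProperEdgeColoring_iff.1 hc).deg_le v)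
  have hpos : 0 < edgeChromaticNumber G := (Nat.zero_le _).trans_lt (hc.1 s(x, y) hxy)
  -- a colouring of `G - xy` with `χ'(G) - 1` colours forces `χ'(G) - 1 + 2 ≤ d(x) + d(y)`
  obtain ⟨c₀, hc₀⟩ := hG.exists_isEdgeColoringOn_sdiff (f := s(x, y)) hxy
  have hle := hc₀.add_two_le_deg_add_deg (hk (by omega)) hxy
  have hχ : edgeChromaticNumber G = maxDeg G + 1 := by
    have := hG.1
    omega
  refine ⟨hdeg, hk (by omega), fun f hf => ?_⟩
  obtain ⟨c, hc⟩ := hG.exists_isEdgeColoringOn_sdiff hf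
  exact ⟨c, hc.mono_colors (by omega)⟩

end IsCritical

/-- If `G` is critical and `xy ∈ E(G)` with `d_G(x) + d_G(y) = Δ(G) + 2`,
then every vertex of `N(N(x) ∪ N(y)) \ {x, y}` has degree at least `Δ(G) − 1`. -/
theorem critical_second_neighbors_degree [Fintype V] (G : SimpleGraph V)
    (hG : IsCritical G) {x y : V} (hxy : G.Adj x y)
    (hdeg : deg G x + deg G y = maxDeg G + 2) :
    ∀ u ∈ (⋃ w ∈ G.neighborSet x ∪ G.neighborSet y, G.neighborSet w) \ {x, y},
      maxDeg G - 1 ≤ deg G u := by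
  have hG' := hG.isEdgeCritical hxy hdeg
  rintro u ⟨hu, huxy⟩
  simp only [Set.mem_iUnion, Set.mem_union, mem_neighborSet, exists_prop] at hu
  simp only [Set.mem_insert_iff, Set.mem_singleton_iff, not_or] at huxy
  obtain ⟨w, hw | hw, hwu⟩ := hu
  · have := hG'.le_deg_add_one hxy hdeg hw hwu huxy.1 huxy.2
    omega
  · have := hG'.le_deg_add_one hxy.symm (by omega) hw hwu huxy.2 huxy.1
    omega
end
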